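/- Let C₀, M > 0. There exists C > 0, depending only on C₀ and M, such that for every ε ∈ (0,1) the following holds: if φ_ε : T³ → ℝ is a smooth function satisfying ε ∫_{T³} |∇ₓφ_ε|² dx ≤ C₀ and (1/ε²) ∫_{T³} ( e^{εφ_ε}(εφ_ε − 1) + 1 ) dx ≤ C₀, and if φ₁ : T³ → ℝ is smooth with ‖Δ ∂_{x₁} φ₁‖_{L^∞} ≤ M and ‖∇ₓ ∂_{x₁} φ₁‖_{L^∞} ≤ M, then (1/ε) | ∫_{T³} ( e^{εφ_ε} − ε φ_ε ) Δ ∂_{x₁} φ₁ dx | ≤ C √ε. -/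

import Mathlib

noncomputable section

open MeasureTheory Real

set_option maxHeartbeats 1000000

/-- Points of (the universal cover of) the three-dimensional torus. -/
abbrev V3 := Fin 3 → ℝ

/-- Partial derivative in the `i`-th direction. -/
def pdx (i : Fin 3) (g : V3 → ℝ) : V3 → ℝ :=
  fun x => deriv (fun s => g (Function.update x i s)) (x i)

/-- Periodicity with period `1` in each coordinate (functions on the torus `T³`). -/
def Per3 (g : V3 → ℝ) : Prop := ∀ x i, g (Function.update x i (x i + 1)) = g x

/-- A fundamental domain of `T³`. -/
def cube3 : Set V3 := Set.univ.pi fun _ => Set.Ioc (0:ℝ) 1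


lemma update_eq_line (x : V3) (i : Fin 3) (s : ℝ) :
    Function.update x i s = x + (s - x i) • (Pi.single i 1 : V3) := by
  funext j
  by_cases h : j = i
  · subst h; simp [Function.update_self]
  · simp [Function.update_of_ne h, Pi.single_apply, h]

lemma pdx_hasDerivAt_aux {g : V3 → ℝ} (hg : Differentiable ℝ g) (x : V3) (i : Fin 3) :
    HasDerivAt (fun s => g (Function.update x i s)) (fderiv ℝ g x (Pi.single i 1)) (x i) := by
  have hL : HasDerivAt (fun s : ℝ => x + (s - x i) • (Pi.single i 1 : V3))
      (Pi.single i 1 : V3) (x i) := by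
    have : HasDerivAt (fun s : ℝ => s - x i) 1 (x i) := (hasDerivAt_id _).sub_const _
    simpa using (this.smul_const (Pi.single i 1 : V3)).const_add x
  have hx : x + ((x i) - x i) • (Pi.single i 1 : V3) = x := by simp
  have hcomp : HasDerivAt (fun s : ℝ => g (x + (s - x i) • (Pi.single i 1 : V3)))
      (fderiv ℝ g (x + ((x i) - x i) • (Pi.single i 1 : V3)) (Pi.single i 1)) (x i) := by
    refine HasFDerivAt.comp_hasDerivAt _ ?_ hL
    rw [hx]; exact (hg x).hasFDerivAt
  rw [hx] at hcomp
  simpa only [← update_eq_line] using hcomp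

lemma pdx_eq {g : V3 → ℝ} (hg : Differentiable ℝ g) (i : Fin 3) (x : V3) :
    pdx i g x = fderiv ℝ g x (Pi.single i 1) := (pdx_hasDerivAt_aux hg x i).deriv

lemma pdx_hasDerivAt {g : V3 → ℝ} (hg : Differentiable ℝ g) (x : V3) (i : Fin 3) :
    HasDerivAt (fun s => g (Function.update x i s)) (pdx i g x) (x i) := by
  rw [pdx_eq hg]; exact pdx_hasDerivAt_aux hg x i

lemma pdx_contDiff {g : V3 → ℝ} (hg : ContDiff ℝ (⊤ : ℕ∞) g) (i : Fin 3) :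
    ContDiff ℝ (⊤ : ℕ∞) (pdx i g) := by
  have : pdx i g = fun x => fderiv ℝ g x (Pi.single i 1) :=
    funext fun x => pdx_eq (hg.differentiable (by simp)) i x
  rw [this]
  exact (hg.fderiv_right (by simp)).clm_apply contDiff_const

lemma pdx_per {g : V3 → ℝ} (hper : Per3 g) (i : Fin 3) : Per3 (pdx i g) := by
  intro x j
  by_cases hij : i = j
  · subst hij
    have hcollapse : Function.update (Function.update x i (x i + 1)) i
        = Function.update x i := by
      funext s; rw [Function.update_idem]
    have hFper : Function.Periodic (fun s => g (Function.update x i s)) 1 := by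
      intro s
      have := hper (Function.update x i s) i
      simpa [Function.update_idem] using this
    show deriv (fun s => g (Function.update (Function.update x i (x i + 1)) i s))
        ((Function.update x i (x i + 1)) i) = _
    rw [hcollapse, Function.update_self]
    have h1 := deriv_comp_add_const (fun s => g (Function.update x i s)) 1 (x i)
    have h2 : (fun s => g (Function.update x i (s + 1)))
        = fun s => g (Function.update x i s) := funext fun s => hFper s
    rw [← h1, h2]; rfl
  · have hcomm : ∀ s, Function.update (Function.update x j (x j + 1)) i s
        = Function.update (Function.update x i s) j (x j + 1) :=
      fun s => (Function.update_comm hij s (x j + 1) x).symm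
    show deriv (fun s => g (Function.update (Function.update x j (x j + 1)) i s))
        ((Function.update x j (x j + 1)) i) = _
    rw [Function.update_of_ne hij]
    have : (fun s => g (Function.update (Function.update x j (x j + 1)) i s))
        = fun s => g (Function.update x i s) := by
      funext s
      rw [hcomm s]
      have hxj : x j = (Function.update x i s) j := (Function.update_of_ne (Ne.symm hij) _ _).symm
      rw [hxj]
      exact hper (Function.update x i s) j
    rw [this]; rfl

lemma cube3_subset : cube3 ⊆ Set.Icc (0 : V3) 1 := by
  intro x hx
  constructor <;> intro i
  · exact (hx i trivial).1.le
  · exact (hx i trivial).2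

lemma integrableOn_cube3 {f : V3 → ℝ} (hf : Continuous f) : IntegrableOn f cube3 :=
  (hf.continuousOn.integrableOn_compact isCompact_Icc).mono_set cube3_subset

lemma cube3_ae_Icc : cube3 =ᵐ[(volume : Measure V3)] Set.Icc (0 : V3) 1 := by
  rw [volume_pi]
  have := Measure.univ_pi_Ioc_ae_eq_Icc (μ := fun _ : Fin 3 => (volume : Measure ℝ))
    (f := fun _ => (0:ℝ)) (g := fun _ => (1:ℝ))
  simpa [cube3, Set.pi_univ_Icc, ← Pi.zero_def, ← Pi.one_def] using this

lemma integral_sum_pdx_eq_zero (h : Fin 3 → V3 → ℝ) (hs : ∀ i, ContDiff ℝ (⊤ : ℕ∞) (h i))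
    (hp : ∀ i, Per3 (h i)) :
    ∫ x in cube3, ∑ i, pdx i (h i) x = 0 := by
  have hdiff : ∀ i, Differentiable ℝ (h i) := fun i => (hs i).differentiable (by simp)
  have key := integral_divergence_of_hasFDerivAt_off_countable (n := 2)
    (0 : V3) (1 : V3) (fun _ => zero_le_one) (fun x i => h i x)
    (fun x => ContinuousLinearMap.pi fun i => fderiv ℝ (h i) x) ∅ Set.countable_empty
    (continuousOn_pi.2 fun i => ((hs i).continuous).continuousOn)
    (fun x _ => hasFDerivAt_pi.2 fun i => (hdiff i x).hasFDerivAt)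
    (by
      apply ContinuousOn.integrableOn_compact isCompact_Icc
      apply Continuous.continuousOn
      apply continuous_finset_sum
      intro i _
      have : Continuous (pdx i (h i)) := (pdx_contDiff (hs i) i).continuous
      have heq : (fun x : V3 => (ContinuousLinearMap.pi fun j => fderiv ℝ (h j) x)
          (Pi.single i 1) i) = pdx i (h i) := by
        funext x
        simp [pdx_eq (hdiff i) i x]
      rw [heq]; exact this)
  have hface : ∀ i : Fin 3, (∫ (x : Fin 2 → ℝ) in
        Set.Icc ((0:V3) ∘ Fin.succAbove i) ((1:V3) ∘ Fin.succAbove i),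
        h i (Fin.insertNth i ((1:V3) i) x)) =
      ∫ (x : Fin 2 → ℝ) in
        Set.Icc ((0:V3) ∘ Fin.succAbove i) ((1:V3) ∘ Fin.succAbove i),
        h i (Fin.insertNth i ((0:V3) i) x) := by
    intro i
    congr 1
    funext y
    have hper := hp i (Fin.insertNth i ((0:V3) i) y) i
    rw [Fin.insertNth_apply_same, Fin.update_insertNth] at hper
    show h i (Fin.insertNth i (1:ℝ) y) = _
    rw [← hper]
    norm_num
  have hzero : (∑ i : Fin 3, ((∫ (x : Fin 2 → ℝ) in
        Set.Icc ((0:V3) ∘ Fin.succAbove i) ((1:V3) ∘ Fin.succAbove i),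
        h i (Fin.insertNth i ((1:V3) i) x)) -
      ∫ (x : Fin 2 → ℝ) in
        Set.Icc ((0:V3) ∘ Fin.succAbove i) ((1:V3) ∘ Fin.succAbove i),
        h i (Fin.insertNth i ((0:V3) i) x))) = 0 :=
    Finset.sum_eq_zero fun i _ => sub_eq_zero.2 (hface i)
  have hLHS : (∫ x in Set.Icc (0:V3) 1, ∑ i,
      (ContinuousLinearMap.pi fun j => fderiv ℝ (h j) x) (Pi.single i 1) i)
      = ∫ x in cube3, ∑ i, pdx i (h i) x := by
    rw [setIntegral_congr_set cube3_ae_Icc]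
    congr 1
    funext x
    exact Finset.sum_congr rfl fun i _ => by simp [pdx_eq (hdiff i) i x]
  rw [hLHS, hzero] at key
  exact key



lemma pdx_mul {f g : V3 → ℝ} (hf : Differentiable ℝ f) (hg : Differentiable ℝ g)
    (i : Fin 3) (x : V3) :
    pdx i (fun y => f y * g y) x = pdx i f x * g x + f x * pdx i g x := by
  have h := ((pdx_hasDerivAt hf x i).mul (pdx_hasDerivAt hg x i)).deriv
  simp only [Function.update_eq_self] at h
  exact h

lemma per3_comp {g : V3 → ℝ} (hg : Per3 g) (F : ℝ → ℝ) : Per3 (fun y => F (g y)) :=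
  fun x i => by simp only [hg x i]

lemma per3_mul {f g : V3 → ℝ} (hf : Per3 f) (hg : Per3 g) : Per3 (fun y => f y * g y) :=
  fun x i => by simp only [hf x i, hg x i]

lemma contDiff_B (ε : ℝ) {φe : V3 → ℝ} (hce : ContDiff ℝ (⊤ : ℕ∞) φe) :
    ContDiff ℝ (⊤ : ℕ∞) (fun y => Real.exp (ε * φe y / 2) - ε * φe y / 2 - 1) :=
  ((Real.contDiff_exp.comp ((contDiff_const.mul hce).div_const 2)).sub
    ((contDiff_const.mul hce).div_const 2)).sub contDiff_const

lemma pdx_B (ε : ℝ) {φe : V3 → ℝ} (hce : ContDiff ℝ (⊤ : ℕ∞) φe) (i : Fin 3) (x : V3) :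
    pdx i (fun y => Real.exp (ε * φe y / 2) - ε * φe y / 2 - 1) x
      = ε / 2 * (Real.exp (ε * φe x / 2) - 1) * pdx i φe x := by
  have hinner := pdx_hasDerivAt (hce.differentiable (by simp)) x i
  have houter : ∀ t : ℝ, HasDerivAt (fun t : ℝ => Real.exp (ε * t / 2) - ε * t / 2 - 1)
      (Real.exp (ε * t / 2) * (ε / 2) - ε / 2) t := by
    intro t
    have h1 : HasDerivAt (fun t : ℝ => ε * t / 2) (ε / 2) t := by
      simpa using ((hasDerivAt_id t).const_mul ε).div_const 2
    simpa using (h1.exp.sub h1).sub_const 1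
  have hcomp := (houter _).comp (x i) hinner
  simp only [Function.update_eq_self] at hcomp
  exact hcomp.deriv.trans (by ring)

lemma one_sub_mul_exp_le (s : ℝ) : (1 - s) * Real.exp s ≤ 1 := by
  have h1 : 1 - s ≤ Real.exp (-s) := by
    have := Real.add_one_le_exp (-s); linarith
  calc (1 - s) * Real.exp s ≤ Real.exp (-s) * Real.exp s :=
        mul_le_mul_of_nonneg_right h1 (Real.exp_pos s).le
    _ = 1 := by rw [← Real.exp_add]; simp

lemma sq_exp_half_le (t : ℝ) : (Real.exp (t/2) - 1)^2 ≤ Real.exp t * (t - 1) + 1 := by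
  have h2 : Real.exp t = Real.exp (t/2) * Real.exp (t/2) := by
    rw [← Real.exp_add]; ring_nf
  have h := one_sub_mul_exp_le (t/2)
  have hpos := Real.exp_pos (t/2)
  nlinarith [mul_le_mul_of_nonneg_left h hpos.le]


/-- Technical lemma: if `φ_ε` satisfies the electric-field bound `ε ∫ |∇φ_ε|² ≤ C₀` and
the `L log L` bound `(1/ε²) ∫ (e^{εφ_ε}(εφ_ε − 1) + 1) ≤ C₀`, and if `φ₁` has
`‖Δ∂_{x₁}φ₁‖_∞ ≤ M` and `‖∇∂_{x₁}φ₁‖_∞ ≤ M`, then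
`(1/ε) |∫ (e^{εφ_ε} − εφ_ε) Δ∂_{x₁}φ₁ dx| ≤ C √ε`, with `C` depending only on `C₀, M`. -/
theorem stmt_12 (C₀ M : ℝ) (hC₀ : 0 < C₀) (hM : 0 < M) :
    ∃ C > (0:ℝ), ∀ ε ∈ Set.Ioo (0:ℝ) 1, ∀ φe φ₁ : V3 → ℝ,
      ContDiff ℝ (⊤ : ℕ∞) φe → Per3 φe → ContDiff ℝ (⊤ : ℕ∞) φ₁ → Per3 φ₁ →
      ε * (∫ x in cube3, ∑ i, (pdx i φe x) ^ 2) ≤ C₀ →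
      (1 / ε ^ 2) * (∫ x in cube3, (Real.exp (ε * φe x) * (ε * φe x - 1) + 1)) ≤ C₀ →
      (∀ x, |∑ i, pdx i (pdx i (pdx 0 φ₁)) x| ≤ M) →
      (∀ x i, |pdx i (pdx 0 φ₁) x| ≤ M) →
      (1 / ε) * |∫ x in cube3,
          (Real.exp (ε * φe x) - ε * φe x) * ∑ i, pdx i (pdx i (pdx 0 φ₁)) x|
        ≤ C * Real.sqrt ε := by
  refine ⟨3 * M * C₀, by positivity, ?_⟩
  rintro ε ⟨hε0, hε1⟩ φe φ₁ hce hpe hc1 hp1 h1 h2 hM1 hM2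
  obtain ⟨s, hs_def⟩ : ∃ s : ℝ, s = Real.sqrt ε := ⟨_, rfl⟩
  have hs0 : 0 < s := by rw [hs_def]; exact Real.sqrt_pos.2 hε0
  have hss : s * s = ε := by rw [hs_def]; exact Real.mul_self_sqrt hε0.le
  have hs1 : s ≤ 1 := by
    rw [hs_def, show (1:ℝ) = Real.sqrt 1 by simp]
    exact Real.sqrt_le_sqrt hε1.le
  -- abbreviations
  set g : Fin 3 → V3 → ℝ := fun i => pdx i (pdx 0 φ₁) with hg_def
  set D : V3 → ℝ := fun x => ∑ i, pdx i (g i) x with hD_def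
  set R : V3 → ℝ := fun x => Real.exp (ε * φe x / 2) - 1 with hR_def
  set B : V3 → ℝ := fun y => Real.exp (ε * φe y / 2) - ε * φe y / 2 - 1 with hB_def
  -- smoothness / continuity
  have hφed : Differentiable ℝ φe := hce.differentiable (by simp)
  have hgsm : ∀ i, ContDiff ℝ (⊤ : ℕ∞) (g i) := fun i => pdx_contDiff (pdx_contDiff hc1 0) i
  have hgper : ∀ i, Per3 (g i) := fun i => pdx_per (pdx_per hp1 0) i
  have hDc : Continuous D := continuous_finset_sum _ fun i _ =>
    (pdx_contDiff (hgsm i) i).continuous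
  have hhalfc : Continuous (fun x => Real.exp (ε * φe x / 2)) :=
    (Real.contDiff_exp.comp ((contDiff_const.mul hce).div_const 2)).continuous
  have hRc : Continuous R := hhalfc.sub continuous_const
  have hBsm : ContDiff ℝ (⊤ : ℕ∞) B := contDiff_B ε hce
  have hBper : Per3 B := per3_comp hpe (fun t => Real.exp (ε * t / 2) - ε * t / 2 - 1)
  have hpφc : ∀ i, Continuous (pdx i φe) := fun i => (pdx_contDiff hce i).continuous
  -- integrability
  have iS : IntegrableOn (fun x => (R x)^2) cube3 := integrableOn_cube3 (by fun_prop)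
  have iJ : IntegrableOn (fun x => Real.exp (ε * φe x) * (ε * φe x - 1) + 1) cube3 :=
    integrableOn_cube3 (by fun_prop)
  have iP : IntegrableOn (fun x => ∑ i, (pdx i φe x)^2) cube3 :=
    integrableOn_cube3 (continuous_finset_sum _ fun i _ => ((hpφc i).pow 2))
  have iSD : IntegrableOn (fun x => (R x)^2 * D x) cube3 :=
    integrableOn_cube3 (by fun_prop)
  have iBD : IntegrableOn (fun x => B x * D x) cube3 :=
    integrableOn_cube3 (hBsm.continuous.mul hDc)
  have iD : IntegrableOn D cube3 := integrableOn_cube3 hDc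
  have hQc : Continuous (fun x => ∑ i, (ε / 2 * R x * pdx i φe x) * g i x) :=
    continuous_finset_sum _ fun i _ =>
      ((continuous_const.mul hRc).mul (hpφc i)).mul (hgsm i).continuous
  have iQ : IntegrableOn (fun x => ∑ i, (ε / 2 * R x * pdx i φe x) * g i x) cube3 :=
    integrableOn_cube3 hQc
  have iG : IntegrableOn (fun x => M / (4*s) * (3 * (R x)^2
      + ε^3 * ∑ i, (pdx i φe x)^2)) cube3 :=
    integrableOn_cube3 (by
      apply continuous_const.mul
      exact (continuous_const.mul (hRc.pow 2)).add (continuous_const.mul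
        (continuous_finset_sum _ fun i _ => ((hpφc i).pow 2))))
  -- bounds from hypotheses
  have hε2 : (0:ℝ) < ε^2 := pow_pos hε0 2
  have h2' : (∫ x in cube3, (Real.exp (ε * φe x) * (ε * φe x - 1) + 1)) ≤ C₀ * ε^2 := by
    rw [one_div, inv_mul_eq_div, div_le_iff₀ hε2] at h2; exact h2
  have h1' : (∫ x in cube3, ∑ i, (pdx i φe x)^2) ≤ C₀ / ε := by
    rw [le_div_iff₀ hε0, mul_comm]; exact h1
  have hIS : (∫ x in cube3, (R x)^2) ≤ C₀ * ε^2 := by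
    refine le_trans (integral_mono iS iJ fun x => ?_) h2'
    simpa [hR_def] using sq_exp_half_le (ε * φe x)
  have hIS0 : 0 ≤ ∫ x in cube3, (R x)^2 :=
    integral_nonneg fun x => sq_nonneg _
  have hIP0 : 0 ≤ ∫ x in cube3, ∑ i, (pdx i φe x)^2 :=
    integral_nonneg fun x => Finset.sum_nonneg fun i _ => sq_nonneg _
  -- splitting identity
  have hsplit : ∀ x : V3, Real.exp (ε * φe x) - ε * φe x
      = (R x)^2 + 2 * B x + 1 := by
    intro x
    have hEE : Real.exp (ε * φe x) = Real.exp (ε * φe x / 2) * Real.exp (ε * φe x / 2) := by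
      rw [← Real.exp_add]; ring_nf
    rw [hEE]; simp only [hR_def, hB_def]; ring
  have hIsplit : (∫ x in cube3, (Real.exp (ε * φe x) - ε * φe x) * D x)
      = (∫ x in cube3, (R x)^2 * D x) + 2 * (∫ x in cube3, B x * D x)
        + ∫ x in cube3, D x := by
    have hfun : (fun x => (Real.exp (ε * φe x) - ε * φe x) * D x)
        = fun x => (R x)^2 * D x + (2 * (B x * D x) + D x) := by
      funext x; rw [hsplit x]; ring
    have i2 : IntegrableOn (fun x => 2 * (B x * D x) + D x) cube3 :=
      (iBD.const_mul 2).add iD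
    rw [hfun, integral_add iSD i2, integral_add (iBD.const_mul 2) iD,
      integral_const_mul]
    ring
  -- ∫ D = 0
  have hID : (∫ x in cube3, D x) = 0 := integral_sum_pdx_eq_zero g hgsm hgper
  -- integration by parts for ∫ B D
  have hIBP : (∫ x in cube3, B x * D x)
      = - ∫ x in cube3, ∑ i, (ε / 2 * R x * pdx i φe x) * g i x := by
    have h0 : (∫ x in cube3, ∑ i, pdx i (fun y => B y * g i y) x) = 0 :=
      integral_sum_pdx_eq_zero _ (fun i => hBsm.mul (hgsm i))
        (fun i => per3_mul hBper (hgper i))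
    have hpt : ∀ x, (∑ i, pdx i (fun y => B y * g i y) x)
        = (∑ i, (ε / 2 * R x * pdx i φe x) * g i x) + B x * D x := by
      intro x
      have : ∀ i : Fin 3, pdx i (fun y => B y * g i y) x
          = (ε / 2 * R x * pdx i φe x) * g i x + B x * pdx i (g i) x := by
        intro i
        have hBpd : pdx i B x = ε / 2 * R x * pdx i φe x := by
          rw [hR_def]; exact pdx_B ε hce i x
        have h1 := pdx_mul (f := B) (g := g i) (hBsm.differentiable (by simp))
          ((hgsm i).differentiable (by simp)) i x
        rw [h1, hBpd]
      simp only [this, Finset.sum_add_distrib, hD_def, Finset.mul_sum]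
    have hfun : (fun x => ∑ i, pdx i (fun y => B y * g i y) x)
        = fun x => (∑ i, (ε / 2 * R x * pdx i φe x) * g i x) + B x * D x :=
      funext hpt
    rw [hfun, integral_add iQ iBD] at h0
    linarith
  -- bound on T1
  have hT1 : |∫ x in cube3, (R x)^2 * D x| ≤ M * (C₀ * ε^2) := by
    have hptw : ∀ x, |(R x)^2 * D x| ≤ M * (R x)^2 := by
      intro x
      rw [abs_mul, abs_of_nonneg (sq_nonneg (R x))]
      calc (R x)^2 * |D x| ≤ (R x)^2 * M :=
            mul_le_mul_of_nonneg_left (hM1 x) (sq_nonneg _)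
        _ = M * (R x)^2 := by ring
    calc |∫ x in cube3, (R x)^2 * D x| ≤ ∫ x in cube3, |(R x)^2 * D x| :=
          norm_integral_le_integral_norm (fun x => (R x)^2 * D x)
      _ ≤ ∫ x in cube3, M * (R x)^2 := integral_mono iSD.abs (iS.const_mul M) hptw
      _ = M * ∫ x in cube3, (R x)^2 := integral_const_mul _ _
      _ ≤ M * (C₀ * ε^2) := mul_le_mul_of_nonneg_left hIS hM.le
  -- pointwise bound on Q
  have hQptw : ∀ x, |∑ i, (ε / 2 * R x * pdx i φe x) * g i x|
      ≤ M / (4*s) * (3 * (R x)^2 + ε^3 * ∑ i, (pdx i φe x)^2) := by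
    intro x
    have hterm : ∀ i : Fin 3, |(ε / 2 * R x * pdx i φe x) * g i x|
        ≤ M / (4*s) * ((R x)^2 + ε^3 * (pdx i φe x)^2) := by
      intro i
      have hgb := hM2 x i
      have h4s : (0:ℝ) < 4 * s := by positivity
      rw [show M / (4*s) * ((R x)^2 + ε^3 * (pdx i φe x)^2)
          = M * ((R x)^2 + ε^3 * (pdx i φe x)^2) / (4*s) from by ring,
        le_div_iff₀ h4s]
      have habs : |(ε / 2 * R x * pdx i φe x) * g i x|
          ≤ (ε / 2 * |R x| * |pdx i φe x|) * M := by
        rw [abs_mul, abs_mul, abs_mul, abs_of_pos (by linarith : (0:ℝ) < ε/2)]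
        exact mul_le_mul_of_nonneg_left hgb (by positivity)
      have hyoung : (ε / 2 * |R x| * |pdx i φe x|) * M * (4*s)
          ≤ M * ((R x)^2 + ε^3 * (pdx i φe x)^2) := by
        have key : 2 * ε * s * (|R x| * |pdx i φe x|)
            ≤ |R x|^2 + ε^3 * |pdx i φe x|^2 := by
          rw [← hss]
          nlinarith [sq_nonneg (|R x| - s*s*s * |pdx i φe x|)]
        rw [sq_abs, sq_abs] at key
        have h5 := mul_le_mul_of_nonneg_left key hM.le
        calc (ε / 2 * |R x| * |pdx i φe x|) * M * (4*s)
            = M * (2 * ε * s * (|R x| * |pdx i φe x|)) := by ring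
          _ ≤ M * ((R x)^2 + ε^3 * (pdx i φe x)^2) := h5
      calc |(ε / 2 * R x * pdx i φe x) * g i x| * (4*s)
          ≤ (ε / 2 * |R x| * |pdx i φe x|) * M * (4*s) :=
            mul_le_mul_of_nonneg_right habs h4s.le
        _ ≤ M * ((R x)^2 + ε^3 * (pdx i φe x)^2) := hyoung
    calc |∑ i, (ε / 2 * R x * pdx i φe x) * g i x|
        ≤ ∑ i, |(ε / 2 * R x * pdx i φe x) * g i x| :=
          Finset.abs_sum_le_sum_abs _ _
      _ ≤ ∑ i : Fin 3, M / (4*s) * ((R x)^2 + ε^3 * (pdx i φe x)^2) :=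
          Finset.sum_le_sum fun i _ => hterm i
      _ = M / (4*s) * (3 * (R x)^2 + ε^3 * ∑ i, (pdx i φe x)^2) := by
          simp only [mul_add, Finset.sum_add_distrib, Finset.sum_const, Finset.card_univ,
            nsmul_eq_mul, Finset.mul_sum, Fintype.card_fin, Nat.cast_ofNat]
          ring
  -- bound on ∫ Q
  have hT2 : |∫ x in cube3, ∑ i, (ε / 2 * R x * pdx i φe x) * g i x| ≤ M * C₀ * ε * s := by
    calc |∫ x in cube3, ∑ i, (ε / 2 * R x * pdx i φe x) * g i x|
        ≤ ∫ x in cube3, |∑ i, (ε / 2 * R x * pdx i φe x) * g i x| := by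
          simpa using norm_integral_le_integral_norm
            (fun x => ∑ i, (ε / 2 * R x * pdx i φe x) * g i x)
      _ ≤ ∫ x in cube3, M / (4*s) * (3 * (R x)^2 + ε^3 * ∑ i, (pdx i φe x)^2) :=
          integral_mono iQ.abs iG hQptw
      _ = M / (4*s) * (3 * (∫ x in cube3, (R x)^2)
            + ε^3 * ∫ x in cube3, ∑ i, (pdx i φe x)^2) := by
          have iPQ : IntegrableOn (fun x => 3 * (R x)^2
              + ε^3 * ∑ i, (pdx i φe x)^2) cube3 :=
            (iS.const_mul 3).add (iP.const_mul (ε^3))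
          rw [integral_const_mul, integral_add (iS.const_mul 3) (iP.const_mul (ε^3)),
            integral_const_mul, integral_const_mul]
      _ ≤ M / (4*s) * (3 * (C₀ * ε^2) + ε^3 * (C₀ / ε)) := by
          have hIP : (∫ x in cube3, ∑ i, (pdx i φe x)^2) ≤ C₀/ε := h1'
          have hc1' : 3 * (∫ x in cube3, (R x)^2) + ε^3 * ∫ x in cube3, ∑ i, (pdx i φe x)^2
              ≤ 3 * (C₀ * ε^2) + ε^3 * (C₀ / ε) := by
            gcongr
          exact mul_le_mul_of_nonneg_left hc1' (by positivity)
      _ = M * C₀ * ε * s := by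
          have : ε^3 * (C₀ / ε) = C₀ * ε^2 := by field_simp
          rw [this]
          have h4 : 3 * (C₀ * ε^2) + C₀ * ε^2 = 4 * (C₀ * ε^2) := by ring
          rw [h4]
          rw [div_mul_eq_mul_div]
          rw [div_eq_iff (by positivity : (4:ℝ)*s ≠ 0), ← hss]
          ring
  -- final assembly
  have hT : |∫ x in cube3, (Real.exp (ε * φe x) - ε * φe x) * D x|
      ≤ M * (C₀ * ε^2) + 2 * (M * C₀ * ε * s) := by
    rw [hIsplit, hID, hIBP, add_zero]
    calc |(∫ x in cube3, (R x)^2 * D x)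
          + 2 * -(∫ x in cube3, ∑ i, (ε / 2 * R x * pdx i φe x) * g i x)|
        ≤ |∫ x in cube3, (R x)^2 * D x|
          + 2 * |∫ x in cube3, ∑ i, (ε / 2 * R x * pdx i φe x) * g i x| := by
          have := abs_add_le (∫ x in cube3, (R x)^2 * D x)
            (2 * -(∫ x in cube3, ∑ i, (ε / 2 * R x * pdx i φe x) * g i x))
          simpa [abs_mul, abs_neg] using this
      _ ≤ M * (C₀ * ε^2) + 2 * (M * C₀ * ε * s) := by
          gcongr
  rw [one_div, inv_mul_eq_div, div_le_iff₀ hε0, ← hs_def]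
  calc |∫ x in cube3, (Real.exp (ε * φe x) - ε * φe x) * ∑ i, pdx i (pdx i (pdx 0 φ₁)) x|
      = |∫ x in cube3, (Real.exp (ε * φe x) - ε * φe x) * D x| := by rw [hD_def, hg_def]
    _ ≤ M * (C₀ * ε^2) + 2 * (M * C₀ * ε * s) := hT
    _ ≤ 3 * M * C₀ * s * ε := by
        have hεs : ε ≤ s := by nlinarith [hss, hs1, hs0.le]
        have hkey := mul_le_mul_of_nonneg_left hεs
          (by positivity : (0:ℝ) ≤ M * C₀ * ε)
        nlinarith [hkey]
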